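/- arXiv:2508.05789 — 4 statements merged into one kernel-verified Lean document; each statement's English description precedes it below -/
import Mathlib

section
/- For every m with 1 ≤ 2m ≤ M and every k ≥ 1, the charges satisfy the recursion Q_{2m}^{(k)} = Q_{2m−1}^{(k)} + h_{2m} Q_{2m−3}^{(k−1)} + ħ_{2m+1} Q_{2m−4}^{(k−1)} + h_{2m−2} ħ_{2m+1} Q_{2m−6}^{(k−2)} + h_{2m−5} ħ_{2m+1} Q_{2m−8}^{(k−2)}, where any term containing a generator with non-positive index is zero. -/
namespace FFD

variable {A : Type*} [Ring A] [Algebra ℂ A]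

/-- Index pattern for which the extra generator `ħ_{2m+1}` (with parameter `m`)
anticommutes with the plain generator `h l`. -/
def MixedRel (m l : ℤ) : Prop :=
  l = 2 * m - 5 ∨ l = 2 * m - 3 ∨ l = 2 * m - 1 ∨ l = 2 * m + 1 ∨ l = 2 * m ∨ l = 2 * m + 2

/-- Vertex codes of the frustration graph: the even code `2 * i` encodes the plain vertex `i`
(generator `h i`), the odd code `2 * m + 1` encodes the barred vertex `2m+1` (generator
`ħ_{2m+1}`).  Two codes are adjacent exactly when the corresponding generators anticommute. -/
def Adj (v w : ℕ) : Prop :=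
  if v % 2 = 0 then
    if w % 2 = 0 then
      1 ≤ |((v / 2 : ℕ) : ℤ) - ((w / 2 : ℕ) : ℤ)| ∧
        |((v / 2 : ℕ) : ℤ) - ((w / 2 : ℕ) : ℤ)| ≤ 2
    else MixedRel ((w / 2 : ℕ) : ℤ) ((v / 2 : ℕ) : ℤ)
  else
    if w % 2 = 0 then MixedRel ((v / 2 : ℕ) : ℤ) ((w / 2 : ℕ) : ℤ)
    else |((v / 2 : ℕ) : ℤ) - ((w / 2 : ℕ) : ℤ)| = 1

/-- The vertex set of the frustration graph `G n`: plain vertices `1, …, n` and barred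
vertices `2m+1` for `0 ≤ m ≤ ⌊n/2⌋`. -/
def memG (n v : ℕ) : Prop :=
  if v % 2 = 0 then 1 ≤ v / 2 ∧ v / 2 ≤ n else v / 2 ≤ n / 2

/-- The generator attached to a vertex code. -/
def gen (h hb : ℤ → A) (v : ℕ) : A :=
  if v % 2 = 0 then h ((v / 2 : ℕ) : ℤ) else hb ((v / 2 : ℕ) : ℤ)

/-- The product `h_S` of the generators of a set of vertex codes, taken in increasing order
of the codes (for an independent set the factors pairwise commute, so the order is
immaterial). -/
def prodGen (h hb : ℤ → A) (S : Finset ℕ) : A :=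
  ((S.sort (· ≤ ·)).map (gen h hb)).prod

/-- The finite collection of all independent sets of cardinality `k` of `G n`. -/
noncomputable def indepSets (n k : ℕ) : Finset (Finset ℕ) :=
  @Finset.filter _
    (fun S => S.card = k ∧ (∀ v ∈ S, memG n v) ∧ ∀ v ∈ S, ∀ w ∈ S, v ≠ w → ¬Adj v w)
    (fun _ => Classical.propDecidable _)
    (Finset.range (2 * n + 2)).powerset

/-- The charge `Q_n^{(k)}`, with the conventions `Q_n^{(0)} = 1`, `Q_n^{(k)} = 0` for `k < 0`,
and `Q_n^{(k)} = 0` for `n < 0`, `k > 0`. -/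
noncomputable def Q (h hb : ℤ → A) (n k : ℤ) : A :=
  if k < 0 then 0
  else if n < 0 then (if k = 0 then 1 else 0)
  else ∑ S ∈ indepSets n.toNat k.toNat, prodGen h hb S

/-- The transfer matrix `T_n(u) = ∑_{k ≥ 0} (-u)^k Q_n^{(k)}` (a finite sum, since
`Q_n^{(k)} = 0` whenever `k` exceeds the number of vertices of `G n`), with `T_n(u) = 1`
for `n ≤ 0`. -/
noncomputable def T (h hb : ℤ → A) (n : ℤ) (u : ℂ) : A :=
  if n ≤ 0 then 1
  else ∑ k ∈ Finset.range (2 * n.toNat + 3), (-u) ^ k • Q h hb n (k : ℤ)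

/-- `A_{2m-1} = h_{2m} h_{2m-3} + h_{2m-2} ħ_{2m+1}`. -/
def AOp (h hb : ℤ → A) (m : ℤ) : A :=
  h (2 * m) * h (2 * m - 3) + h (2 * m - 2) * hb m

/-- `C_{2m} = h_{2m-3} ħ_{2m+3}`. -/
def COp (h hb : ℤ → A) (m : ℤ) : A := h (2 * m - 3) * hb (m + 1)

/-- `𝕊_{2m} = h_{2m-1} + h_{2m} + ħ_{2m+1}`. -/
def SOp (h hb : ℤ → A) (m : ℤ) : A := h (2 * m - 1) + h (2 * m) + hb m

/-- The defining relations of the extended FFD algebra with generators `h_1, …, h_M` and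
`ħ_{2m+1} = hb m` for `0 ≤ m ≤ ⌊M/2⌋`. -/
structure FFDHyp (M : ℤ) (h hb : ℤ → A) (b bb : ℤ → ℂ) : Prop where
  hsq : ∀ m, 1 ≤ m → m ≤ M → h m * h m = (b m) ^ 2 • (1 : A)
  hanti : ∀ m l, 1 ≤ m → m ≤ M → 1 ≤ l → l ≤ M → 1 ≤ |m - l| → |m - l| ≤ 2 →
    h m * h l = -(h l * h m)
  hcomm : ∀ m l, 1 ≤ m → m ≤ M → 1 ≤ l → l ≤ M → 2 < |m - l| →
    h m * h l = h l * h m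
  hbsq : ∀ m, 0 ≤ m → m ≤ M / 2 → hb m * hb m = (bb m) ^ 2 • (1 : A)
  hbanti : ∀ m l, 0 ≤ m → m ≤ M / 2 → 1 ≤ l → l ≤ M → MixedRel m l →
    hb m * h l = -(h l * hb m)
  hbcomm : ∀ m l, 0 ≤ m → m ≤ M / 2 → 1 ≤ l → l ≤ M → ¬MixedRel m l →
    hb m * h l = h l * hb m
  hbbanti : ∀ m m', 0 ≤ m → m ≤ M / 2 → 0 ≤ m' → m' ≤ M / 2 → |m - m'| = 1 →
    hb m * hb m' = -(hb m' * hb m)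
  hbbcomm : ∀ m m', 0 ≤ m → m ≤ M / 2 → 0 ≤ m' → m' ≤ M / 2 → m ≠ m' → |m - m'| ≠ 1 →
    hb m * hb m' = hb m' * hb m

/-- The extra relation `A_{2m-1} C_{2m+2} = C_{2m} A_{2m+3}` for all `1 < m < ⌊M/2⌋ - 1`. -/
def ACRel (M : ℤ) (h hb : ℤ → A) : Prop :=
  ∀ m : ℤ, 1 < m → m < M / 2 - 1 →
    AOp h hb m * COp h hb (m + 1) = COp h hb m * AOp h hb (m + 2)

/-- The assumption that the products around the even holes are the scalars `μ_{2m-1}`. -/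
def MuScalar (M : ℤ) (h hb : ℤ → A) (μ : ℤ → ℂ) : Prop :=
  ∀ m : ℤ, 1 < m → m ≤ M / 2 →
    h (2 * m - 3) * h (2 * m) * h (2 * m - 2) * hb m = μ m • (1 : A)

/-- The assumption that `𝕊_{2m}²`, `A_{2m-1}²`, `C_{2m}²` are the scalars `s_{2m}`,
`a_{2m-1}`, `c_{2m}` times the identity, the coefficients attached to generators of
non-positive index being set to zero. -/
structure ScalarSquares (M : ℤ) (h hb : ℤ → A) (s a c : ℤ → ℂ) : Prop where
  hs : ∀ m : ℤ, 1 ≤ m → 2 * m ≤ M → SOp h hb m * SOp h hb m = s (2 * m) • (1 : A)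
  hszero : ∀ m : ℤ, m ≤ 0 → s (2 * m) = 0
  ha : ∀ m : ℤ, 2 ≤ m → 2 * m ≤ M → AOp h hb m * AOp h hb m = a (2 * m - 1) • (1 : A)
  hazero : ∀ m : ℤ, m ≤ 1 → a (2 * m - 1) = 0
  hc : ∀ m : ℤ, 2 ≤ m → 2 * m + 2 ≤ M → COp h hb m * COp h hb m = c (2 * m) • (1 : A)
  hczero : ∀ m : ℤ, m ≤ 1 → c (2 * m) = 0

/-- The explicitly defined polynomial sequence `P_n(z)`:
`P_n = 1` for `n ≤ 0`, `P_{2m-1}(z) = P_{2m-2}(z) - b_{2m-1}² z P_{2m-4}(z)` and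
`P_{2m}(z) = P_{2m-2}(z) - s_{2m} z P_{2m-4}(z) + a_{2m-1} z² P_{2m-6}(z)
- c_{2m-2} z² P_{2m-8}(z)`. -/
structure PolyRec (b s a c : ℤ → ℂ) (P : ℤ → ℂ → ℂ) : Prop where
  base : ∀ n : ℤ, n ≤ 0 → ∀ z : ℂ, P n z = 1
  odd : ∀ m : ℤ, 1 ≤ m → ∀ z : ℂ, P (2 * m - 1) z =
    P (2 * m - 2) z - (b (2 * m - 1)) ^ 2 * z * P (2 * m - 4) z
  even : ∀ m : ℤ, 1 ≤ m → ∀ z : ℂ, P (2 * m) z =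
    P (2 * m - 2) z - s (2 * m) * z * P (2 * m - 4) z
      + a (2 * m - 1) * z ^ 2 * P (2 * m - 6) z
      - c (2 * m - 2) * z ^ 2 * P (2 * m - 8) z

/-- `r_M`: equal to `1` for odd `M` and to `2` for even `M`. -/
def rM (M : ℤ) : ℤ := if M % 2 = 1 then 1 else 2

/-- The sum `𝕊` of the generators of the right-end simplicial clique:
`h_M` for odd `M`, and `h_{M-1} + h_M + ħ_{M+1}` for even `M`. -/
def SEdge (M : ℤ) (h hb : ℤ → A) : A :=
  if M % 2 = 1 then h M else h (M - 1) + h M + hb (M / 2)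

/-- The right-end simplicial mode `χ`: it squares to `1`, anticommutes with the generators
of the right-end simplicial clique and commutes with all the other generators. -/
structure EdgeMode (M : ℤ) (h hb : ℤ → A) (χ : A) : Prop where
  sq : χ * χ = 1
  odd : M % 2 = 1 →
    (χ * h M = -(h M * χ)) ∧
    (∀ l : ℤ, 1 ≤ l → l < M → χ * h l = h l * χ) ∧
    (∀ m : ℤ, 0 ≤ m → m ≤ M / 2 → χ * hb m = hb m * χ)
  even : M % 2 = 0 →
    (χ * h (M - 1) = -(h (M - 1) * χ)) ∧
    (χ * h M = -(h M * χ)) ∧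
    (χ * hb (M / 2) = -(hb (M / 2) * χ)) ∧
    (∀ l : ℤ, 1 ≤ l → l ≤ M - 2 → χ * h l = h l * χ) ∧
    (∀ m : ℤ, 0 ≤ m → m < M / 2 → χ * hb m = hb m * χ)


end FFD

/-!
Deletion–contraction for independent sets: splitting the independent `k`-sets of a vertex set
`V` according to whether they contain a vertex `c` gives
`Q_V^{(k)} = Q_{V - c}^{(k)} + h_c Q_{V ∖ N[c]}^{(k-1)}`, because `h_c` commutes with the
generators of all vertices not adjacent to it.  In `G_{2m}` we apply this to `h_{2m}`, whose
non-neighbours form `G_{2m-3}`, and then to `ħ_{2m+1}`; removing both leaves `G_{2m-1}`.  The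
non-neighbours of `ħ_{2m+1}` are `G_{2m-4}` with `h_{2m-5}` replaced by `h_{2m-2}`, so one more
split at `h_{2m-2}`, compared with the split of `G_{2m-4}` at `h_{2m-5}`, produces the last two
terms.  Their signs come from `ħ_{2m+1}` commuting with `h_{2m-2}` and anticommuting with
`h_{2m-5}`.
-/

namespace FFD

open Finset

variable {A : Type*}

theorem adj_two_mul_two_mul {i j : ℕ} :
    Adj (2 * i) (2 * j) ↔ i ≠ j ∧ i ≤ j + 2 ∧ j ≤ i + 2 := by
  simp only [Adj, Nat.mul_mod_right, if_true, Nat.mul_div_cancel_left _ two_pos, le_abs', abs_le]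
  omega

theorem adj_two_mul_two_mul_add_one {i j : ℕ} : Adj (2 * i) (2 * j + 1) ↔ MixedRel j i := by
  simp [Adj, Nat.mul_add_div]

theorem adj_two_mul_add_one_two_mul {i j : ℕ} : Adj (2 * i + 1) (2 * j) ↔ MixedRel i j := by
  simp [Adj, Nat.mul_add_div]

theorem adj_two_mul_add_one_two_mul_add_one {i j : ℕ} :
    Adj (2 * i + 1) (2 * j + 1) ↔ i = j + 1 ∨ j = i + 1 := by
  simp only [Adj, Nat.mul_add_mod_self_left, Nat.mul_add_div two_pos, Nat.reduceMod,
    Nat.reduceDiv, add_zero, one_ne_zero, if_false, abs_eq (zero_le_one' ℤ)]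
  omega

theorem adj_comm {v w : ℕ} : Adj v w ↔ Adj w v := by
  rcases Nat.even_or_odd' v with ⟨i, rfl | rfl⟩ <;>
    rcases Nat.even_or_odd' w with ⟨j, rfl | rfl⟩ <;>
    simp only [adj_two_mul_two_mul, adj_two_mul_two_mul_add_one, adj_two_mul_add_one_two_mul,
      adj_two_mul_add_one_two_mul_add_one] <;> omega

/-- The vertex codes of `G_t`, for an integer `t`; empty when `t < 0`. -/
def vertices (t : ℤ) : Finset ℕ :=
  {v ∈ range (2 * t.toNat + 2) |
    (v % 2 = 0 ∧ 1 ≤ v / 2 ∧ ((v / 2 : ℕ) : ℤ) ≤ t) ∨ (v % 2 = 1 ∧ 2 * ((v / 2 : ℕ) : ℤ) ≤ t)}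

theorem mem_vertices {t : ℤ} {v : ℕ} : v ∈ vertices t ↔
    (v % 2 = 0 ∧ 1 ≤ v / 2 ∧ ((v / 2 : ℕ) : ℤ) ≤ t) ∨ (v % 2 = 1 ∧ 2 * ((v / 2 : ℕ) : ℤ) ≤ t) := by
  simp only [vertices, mem_filter, mem_range, and_iff_right_iff_imp]
  omega

theorem two_mul_mem_vertices {t : ℤ} {i : ℕ} : 2 * i ∈ vertices t ↔ 1 ≤ i ∧ (i : ℤ) ≤ t := by
  rw [mem_vertices]
  omega

theorem two_mul_add_one_mem_vertices {t : ℤ} {i : ℕ} :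
    2 * i + 1 ∈ vertices t ↔ 2 * (i : ℤ) ≤ t := by
  rw [mem_vertices]
  omega

theorem vertices_mono {s t : ℤ} (hst : s ≤ t) : vertices s ⊆ vertices t := by
  intro v
  simp only [mem_vertices]
  omega

theorem vertices_eq_empty {t : ℤ} (ht : t < 0) : vertices t = ∅ := by
  ext v
  simp only [mem_vertices, notMem_empty, iff_false]
  omega

theorem mem_vertices_iff_memG {t : ℤ} (ht : 0 ≤ t) {v : ℕ} :
    v ∈ vertices t ↔ memG t.toNat v := by
  rw [mem_vertices, memG]
  split_ifs <;> omega

/-- The code of `h_i`.  For `i ≤ 0` it is the code `0`, which is not a vertex but still carries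
the generator `h 0`. -/
def plain (i : ℤ) : ℕ := 2 * i.toNat

def barred (m : ℤ) : ℕ := 2 * m.toNat + 1

theorem plain_mem_vertices {i t : ℤ} (hi : 1 ≤ i) (hit : i ≤ t) : plain i ∈ vertices t := by
  rw [plain, two_mul_mem_vertices]
  omega

theorem barred_mem_vertices {m t : ℤ} (hm : 0 ≤ m) (hmt : 2 * m ≤ t) : barred m ∈ vertices t := by
  rw [barred, two_mul_add_one_mem_vertices]
  omega

theorem barred_ne_plain (m i : ℤ) : barred m ≠ plain i := by
  rw [barred, plain]
  omega

theorem gen_two_mul (h hb : ℤ → A) (i : ℕ) : gen h hb (2 * i) = h i := by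
  simp [gen]

theorem gen_two_mul_add_one (h hb : ℤ → A) (i : ℕ) : gen h hb (2 * i + 1) = hb i := by
  simp [gen, Nat.mul_add_div]

theorem gen_plain [Zero A] {h hb : ℤ → A} (hzero : ∀ i : ℤ, i ≤ 0 → h i = 0) (i : ℤ) :
    gen h hb (plain i) = h i := by
  rw [plain, gen_two_mul]
  rcases le_or_gt i 0 with hi | hi
  · rw [Int.toNat_of_nonpos hi, Nat.cast_zero, hzero i hi, hzero 0 le_rfl]
  · rw [Int.toNat_of_nonneg hi.le]

theorem gen_barred (h hb : ℤ → A) {m : ℤ} (hm : 0 ≤ m) : gen h hb (barred m) = hb m := by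
  rw [barred, gen_two_mul_add_one, Int.toNat_of_nonneg hm]

theorem plain_mem_or_gen_eq_zero [Zero A] {h hb : ℤ → A} (hzero : ∀ i : ℤ, i ≤ 0 → h i = 0)
    {i : ℤ} {V : Finset ℕ} (hV : 1 ≤ i → plain i ∈ V) : plain i ∈ V ∨ gen h hb (plain i) = 0 := by
  rw [gen_plain hzero]
  rcases le_or_gt i 0 with hi | hi
  · exact Or.inr (hzero i hi)
  · exact Or.inl (hV hi)

theorem FFDHyp.commute_gen_of_not_adj [Ring A] [Algebra ℂ A] {M : ℤ} {h hb : ℤ → A} {b bb : ℤ → ℂ}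
    (hyp : FFDHyp M h hb b bb) {v w : ℕ} (hv : v ∈ vertices M) (hw : w ∈ vertices M)
    (hvw : ¬Adj v w) : Commute (gen h hb v) (gen h hb w) := by
  rcases Nat.even_or_odd' v with ⟨i, rfl | rfl⟩ <;>
    rcases Nat.even_or_odd' w with ⟨j, rfl | rfl⟩ <;>
    simp only [gen_two_mul, gen_two_mul_add_one, two_mul_mem_vertices, two_mul_add_one_mem_vertices,
      adj_two_mul_two_mul, adj_two_mul_two_mul_add_one, adj_two_mul_add_one_two_mul,
      adj_two_mul_add_one_two_mul_add_one] at hv hw hvw ⊢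
  · obtain rfl | hij := eq_or_ne i j
    · exact Commute.refl _
    exact hyp.hcomm i j (by omega) (by omega) (by omega) (by omega) (by rw [lt_abs]; omega)
  · exact (hyp.hbcomm j i (by omega) (by omega) (by omega) (by omega) hvw).symm
  · exact hyp.hbcomm i j (by omega) (by omega) (by omega) (by omega) hvw
  · obtain rfl | hij := eq_or_ne i j
    · exact Commute.refl _
    exact hyp.hbbcomm i j (by omega) (by omega) (by omega) (by omega) (by omega)
      (by rw [Ne, abs_eq (zero_le_one' ℤ)]; omega)

/-- The size `k` is an integer so that `k < 0` gives no sets, as in the conventions of `Q`. -/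
noncomputable def indepSetsIn (V : Finset ℕ) (k : ℤ) : Finset (Finset ℕ) :=
  open Classical in
  {S ∈ V.powerset | (S.card : ℤ) = k ∧ (S : Set ℕ).Pairwise fun v w => ¬Adj v w}

open Classical in
theorem mem_indepSetsIn {V S : Finset ℕ} {k : ℤ} : S ∈ indepSetsIn V k ↔
    S ⊆ V ∧ (S.card : ℤ) = k ∧ (S : Set ℕ).Pairwise fun v w => ¬Adj v w := by
  rw [indepSetsIn, mem_filter, mem_powerset]

theorem indepSetsIn_empty (k : ℤ) : indepSetsIn ∅ k = if k = 0 then {∅} else ∅ := by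
  ext S
  split_ifs with hk <;> simp +contextual [mem_indepSetsIn, hk, eq_comm]

theorem indepSetsIn_eq_empty {k : ℤ} (hk : k < 0) (V : Finset ℕ) : indepSetsIn V k = ∅ := by
  ext S
  simp only [mem_indepSetsIn, notMem_empty, iff_false]
  omega

theorem indepSets_eq_indepSetsIn {n k : ℤ} (hn : 0 ≤ n) (hk : 0 ≤ k) :
    indepSets n.toNat k.toNat = indepSetsIn (vertices n) k := by
  ext S
  simp only [indepSets, mem_filter, mem_powerset, mem_indepSetsIn, ← mem_vertices_iff_memG hn]
  constructor
  · rintro ⟨-, hcard, hS, hind⟩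
    exact ⟨hS, by omega, fun v hv w hw => hind v hv w hw⟩
  · rintro ⟨hS, hcard, hind⟩
    exact ⟨hS.trans (filter_subset _ _), by omega, hS, fun v hv w hw => hind hv hw⟩

noncomputable def deleteClosedNbhd (V : Finset ℕ) (c : ℕ) : Finset ℕ :=
  open Classical in
  {v ∈ V | v ≠ c ∧ ¬Adj c v}

open Classical in
theorem mem_deleteClosedNbhd {V : Finset ℕ} {c v : ℕ} :
    v ∈ deleteClosedNbhd V c ↔ v ∈ V ∧ v ≠ c ∧ ¬Adj c v := by
  rw [deleteClosedNbhd, mem_filter]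

theorem deleteClosedNbhd_subset (V : Finset ℕ) (c : ℕ) : deleteClosedNbhd V c ⊆ V :=
  fun _ hv => (mem_deleteClosedNbhd.1 hv).1

open Classical in
theorem filter_notMem_indepSetsIn (V : Finset ℕ) (c : ℕ) (k : ℤ) :
    {S ∈ indepSetsIn V k | c ∉ S} = indepSetsIn (V.erase c) k := by
  ext S
  simp only [mem_filter, mem_indepSetsIn, subset_erase]
  tauto

open Classical in
theorem filter_mem_indepSetsIn {V : Finset ℕ} {c : ℕ} (hc : c ∈ V) (k : ℤ) :
    {S ∈ indepSetsIn V k | c ∈ S} =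
      (indepSetsIn (deleteClosedNbhd V c) (k - 1)).image (insert c) := by
  ext S
  simp only [mem_filter, mem_image, mem_indepSetsIn]
  constructor
  · rintro ⟨⟨hSV, hcard, hS⟩, hcS⟩
    refine ⟨S.erase c, ⟨fun v hv => ?_, ?_, hS.mono (by simp)⟩, insert_erase hcS⟩
    · obtain ⟨hvc, hvS⟩ := mem_erase.1 hv
      exact mem_deleteClosedNbhd.2 ⟨hSV hvS, hvc, hS hcS hvS (Ne.symm hvc)⟩
    · rw [card_erase_of_mem hcS, Nat.cast_sub (card_pos.2 ⟨c, hcS⟩), hcard, Nat.cast_one]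
  · rintro ⟨T, ⟨hT, hcard, hTind⟩, rfl⟩
    have hcT : c ∉ T := fun hcT => (mem_deleteClosedNbhd.1 (hT hcT)).2.1 rfl
    refine ⟨⟨insert_subset hc (hT.trans (deleteClosedNbhd_subset _ _)), ?_, ?_⟩,
      mem_insert_self c T⟩
    · rw [card_insert_of_notMem hcT]
      push_cast
      omega
    · rw [coe_insert, Set.pairwise_insert_of_notMem (mod_cast hcT)]
      refine ⟨hTind, fun v hv => ?_⟩
      have hcv := (mem_deleteClosedNbhd.1 (hT hv)).2.2
      exact ⟨hcv, mt adj_comm.1 hcv⟩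

section Ring

variable [Ring A] (h hb : ℤ → A)

theorem prodGen_insert {c : ℕ} {S : Finset ℕ} (hc : c ∉ S)
    (hcS : ∀ v ∈ S, Commute (gen h hb c) (gen h hb v))
    (hS : ∀ v ∈ S, ∀ w ∈ S, Commute (gen h hb v) (gen h hb w)) :
    prodGen h hb (insert c S) = gen h hb c * prodGen h hb S := by
  have hperm : ((insert c S).sort (· ≤ ·)).map (gen h hb)
      |>.Perm (gen h hb c :: (S.sort (· ≤ ·)).map (gen h hb)) :=
    (((sort_perm_toList _ _).trans (toList_insert hc)).trans
      ((sort_perm_toList _ _).symm.cons c)).map _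
  have hcomm : (gen h hb c :: (S.sort (· ≤ ·)).map (gen h hb)).Pairwise Commute := by
    simp only [List.pairwise_cons, List.mem_map, mem_sort, List.pairwise_map]
    refine ⟨?_, List.pairwise_of_forall_mem_list fun v hv w hw => ?_⟩
    · rintro _ ⟨v, hv, rfl⟩
      exact hcS v hv
    · exact hS v ((mem_sort _).1 hv) w ((mem_sort _).1 hw)
  rw [prodGen, ← hperm.symm.prod_eq' hcomm, List.prod_cons, prodGen]

noncomputable def indepSum (V : Finset ℕ) (k : ℤ) : A :=
  ∑ S ∈ indepSetsIn V k, prodGen h hb S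

theorem Q_eq_indepSum (n k : ℤ) : Q h hb n k = indepSum h hb (vertices n) k := by
  unfold Q indepSum
  split_ifs with hk hn hk0
  · rw [indepSetsIn_eq_empty hk, sum_empty]
  · rw [vertices_eq_empty hn, indepSetsIn_empty, if_pos hk0, sum_singleton, prodGen, sort_empty,
      List.map_nil, List.prod_nil]
  · rw [vertices_eq_empty hn, indepSetsIn_empty, if_neg hk0, sum_empty]
  · rw [indepSets_eq_indepSetsIn (not_lt.1 hn) (not_lt.1 hk)]

variable {h hb}

theorem indepSum_eq_erase_add {V : Finset ℕ} {c : ℕ}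
    (hV : ∀ v ∈ V, ∀ w ∈ V, ¬Adj v w → Commute (gen h hb v) (gen h hb w))
    (hc : c ∈ V ∨ gen h hb c = 0) (k : ℤ) :
    indepSum h hb V k = indepSum h hb (V.erase c) k
      + gen h hb c * indepSum h hb (deleteClosedNbhd V c) (k - 1) := by
  classical
  by_cases hcV : c ∈ V
  · have hcT : ∀ T ∈ indepSetsIn (deleteClosedNbhd V c) (k - 1), c ∉ T :=
      fun T hT hcT => (mem_deleteClosedNbhd.1 ((mem_indepSetsIn.1 hT).1 hcT)).2.1 rfl
    have hinj : Set.InjOn (insert c)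
        (indepSetsIn (deleteClosedNbhd V c) (k - 1) : Set (Finset ℕ)) :=
      fun T hT T' hT' hTT' => by rw [← erase_insert (hcT T hT), hTT', erase_insert (hcT T' hT')]
    rw [indepSum, ← sum_filter_not_add_sum_filter _ (c ∈ ·), filter_notMem_indepSetsIn,
      filter_mem_indepSetsIn hcV, sum_image hinj, indepSum, indepSum, mul_sum]
    refine congrArg _ (sum_congr rfl fun T hT => ?_)
    obtain ⟨hTc, -, hTind⟩ := mem_indepSetsIn.1 hT
    have hTV : T ⊆ V := hTc.trans (deleteClosedNbhd_subset _ _)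
    refine prodGen_insert h hb (hcT T hT)
      (fun v hv => hV c hcV v (hTV hv) (mem_deleteClosedNbhd.1 (hTc hv)).2.2)
      fun v hv w hw => ?_
    obtain rfl | hvw := eq_or_ne v w
    · exact Commute.refl _
    · exact hV v (hTV hv) w (hTV hw) (hTind hv hw hvw)
  · rw [erase_eq_of_notMem hcV, hc.resolve_left hcV, zero_mul, add_zero]

end Ring

section Neighbourhoods

variable {m : ℤ}

theorem deleteClosedNbhd_vertices_plain_two_mul :
    deleteClosedNbhd (vertices (2 * m)) (plain (2 * m)) = vertices (2 * m - 3) := by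
  ext v
  rcases Nat.even_or_odd' v with ⟨i, rfl | rfl⟩ <;>
    simp only [mem_deleteClosedNbhd, plain, two_mul_mem_vertices, two_mul_add_one_mem_vertices,
      adj_two_mul_two_mul, adj_two_mul_two_mul_add_one, MixedRel] <;> omega

theorem vertices_erase_plain_erase_barred :
    ((vertices (2 * m)).erase (plain (2 * m))).erase (barred m) = vertices (2 * m - 1) := by
  ext v
  rcases Nat.even_or_odd' v with ⟨i, rfl | rfl⟩ <;>
    simp only [mem_erase, plain, barred, two_mul_mem_vertices, two_mul_add_one_mem_vertices] <;>
    omega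

theorem deleteClosedNbhd_barred_erase_plain_two_mul_sub_two :
    (deleteClosedNbhd ((vertices (2 * m)).erase (plain (2 * m))) (barred m)).erase
      (plain (2 * m - 2)) = (vertices (2 * m - 4)).erase (plain (2 * m - 5)) := by
  ext v
  rcases Nat.even_or_odd' v with ⟨i, rfl | rfl⟩ <;>
    simp only [mem_erase, mem_deleteClosedNbhd, plain, barred, two_mul_mem_vertices,
      two_mul_add_one_mem_vertices, adj_two_mul_add_one_two_mul,
      adj_two_mul_add_one_two_mul_add_one, MixedRel] <;> omega

theorem deleteClosedNbhd_barred_deleteClosedNbhd_plain_two_mul_sub_two :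
    deleteClosedNbhd (deleteClosedNbhd ((vertices (2 * m)).erase (plain (2 * m))) (barred m))
      (plain (2 * m - 2)) = vertices (2 * m - 6) := by
  ext v
  rcases Nat.even_or_odd' v with ⟨i, rfl | rfl⟩ <;>
    simp only [mem_erase, mem_deleteClosedNbhd, plain, barred, two_mul_mem_vertices,
      two_mul_add_one_mem_vertices, adj_two_mul_two_mul, adj_two_mul_two_mul_add_one,
      adj_two_mul_add_one_two_mul, adj_two_mul_add_one_two_mul_add_one, MixedRel] <;> omega

theorem deleteClosedNbhd_vertices_plain_two_mul_sub_five :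
    deleteClosedNbhd (vertices (2 * m - 4)) (plain (2 * m - 5)) = vertices (2 * m - 8) := by
  ext v
  rcases Nat.even_or_odd' v with ⟨i, rfl | rfl⟩ <;>
    simp only [mem_deleteClosedNbhd, plain, two_mul_mem_vertices, two_mul_add_one_mem_vertices,
      adj_two_mul_two_mul, adj_two_mul_two_mul_add_one, MixedRel] <;> omega

theorem plain_two_mul_sub_two_mem_deleteClosedNbhd (hm : 2 ≤ m) :
    plain (2 * m - 2) ∈ deleteClosedNbhd ((vertices (2 * m)).erase (plain (2 * m))) (barred m) := by
  simp only [mem_deleteClosedNbhd, mem_erase, plain, barred, two_mul_mem_vertices,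
    adj_two_mul_add_one_two_mul, MixedRel]
  omega

end Neighbourhoods

section Relations

variable [Ring A] [Algebra ℂ A] {M m : ℤ} {h hb : ℤ → A} {b bb : ℤ → ℂ}

theorem FFDHyp.commute_hb_h_two_mul_sub_two (hyp : FFDHyp M h hb b bb)
    (hzero : ∀ i : ℤ, i ≤ 0 → h i = 0) (hm : 1 ≤ m) (hmM : 2 * m ≤ M) :
    Commute (hb m) (h (2 * m - 2)) := by
  rcases hm.eq_or_lt with rfl | hm
  · rw [hzero _ (by norm_num)]
    exact Commute.zero_right _
  · exact hyp.hbcomm m (2 * m - 2) (by omega) (by omega) (by omega) (by omega)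
      (by unfold MixedRel; omega)

theorem FFDHyp.anticommute_hb_h_two_mul_sub_five (hyp : FFDHyp M h hb b bb)
    (hzero : ∀ i : ℤ, i ≤ 0 → h i = 0) (hm : 0 ≤ m) (hmM : 2 * m ≤ M) :
    hb m * h (2 * m - 5) = -(h (2 * m - 5) * hb m) := by
  rcases le_or_gt m 2 with hm2 | hm2
  · rw [hzero _ (by omega), mul_zero, zero_mul, neg_zero]
  · exact hyp.hbanti m (2 * m - 5) hm (by omega) (by omega) (by omega) (Or.inl rfl)

end Relations

theorem charge_recursion_even_general
    {A : Type*} [Ring A] [Algebra ℂ A]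
    (M : ℤ) (h hb : ℤ → A) (b bb : ℤ → ℂ)
    (hyp : FFDHyp M h hb b bb)
    (hzero : ∀ i : ℤ, i ≤ 0 → h i = 0) :
    ∀ m k : ℤ, 1 ≤ 2 * m → 2 * m ≤ M → 1 ≤ k →
      Q h hb (2 * m) k =
        Q h hb (2 * m - 1) k + h (2 * m) * Q h hb (2 * m - 3) (k - 1)
          + hb m * Q h hb (2 * m - 4) (k - 1)
          + h (2 * m - 2) * hb m * Q h hb (2 * m - 6) (k - 2)
          + h (2 * m - 5) * hb m * Q h hb (2 * m - 8) (k - 2) := by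
  intro m k hm hmM _
  have hcomm : ∀ V ⊆ vertices (2 * m), ∀ v ∈ V, ∀ w ∈ V, ¬Adj v w →
      Commute (gen h hb v) (gen h hb w) := fun V hV v hv w hw =>
    hyp.commute_gen_of_not_adj (vertices_mono hmM (hV hv)) (vertices_mono hmM (hV hw))
  simp only [Q_eq_indepSum]
  rw [indepSum_eq_erase_add (hcomm _ subset_rfl) (Or.inl (plain_mem_vertices (by omega) le_rfl)),
    indepSum_eq_erase_add (c := barred m) (hcomm _ (erase_subset _ _))
      (Or.inl (mem_erase.2 ⟨barred_ne_plain _ _, barred_mem_vertices (by omega) le_rfl⟩)),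
    indepSum_eq_erase_add (c := plain (2 * m - 2))
      (hcomm _ ((deleteClosedNbhd_subset _ _).trans (erase_subset _ _)))
      (plain_mem_or_gen_eq_zero hzero fun _ =>
        plain_two_mul_sub_two_mem_deleteClosedNbhd (by omega)),
    indepSum_eq_erase_add (V := vertices (2 * m - 4)) (c := plain (2 * m - 5))
      (hcomm _ (vertices_mono (by omega)))
      (plain_mem_or_gen_eq_zero hzero fun hm5 => plain_mem_vertices hm5 (by omega)),
    deleteClosedNbhd_vertices_plain_two_mul, vertices_erase_plain_erase_barred,
    deleteClosedNbhd_barred_erase_plain_two_mul_sub_two,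
    deleteClosedNbhd_barred_deleteClosedNbhd_plain_two_mul_sub_two,
    deleteClosedNbhd_vertices_plain_two_mul_sub_five, gen_plain hzero, gen_plain hzero,
    gen_plain hzero, gen_barred h hb (by omega : 0 ≤ m), sub_sub, one_add_one_eq_two]
  simp only [mul_add, ← mul_assoc, (hyp.commute_hb_h_two_mul_sub_two hzero (by omega) hmM).eq,
    hyp.anticommute_hb_h_two_mul_sub_five hzero (by omega) hmM, neg_mul]
  abel

/-- The even-index recursion for the charges:
`Q_{2m}^{(k)} = Q_{2m-1}^{(k)} + h_{2m} Q_{2m-3}^{(k-1)} + ħ_{2m+1} Q_{2m-4}^{(k-1)}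
 + h_{2m-2} ħ_{2m+1} Q_{2m-6}^{(k-2)} + h_{2m-5} ħ_{2m+1} Q_{2m-8}^{(k-2)}`,
where any term containing a generator with non-positive index is zero
(hypothesis `hzero`). -/
theorem charge_recursion_even
    {A : Type*} [Ring A] [Algebra ℂ A]
    (M : ℤ) (hM : 4 ≤ M) (h hb : ℤ → A) (b bb : ℤ → ℂ)
    (hyp : FFDHyp M h hb b bb)
    (hzero : ∀ i : ℤ, i ≤ 0 → h i = 0) :
    ∀ m k : ℤ, 1 ≤ 2 * m → 2 * m ≤ M → 1 ≤ k →
      Q h hb (2 * m) k =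
        Q h hb (2 * m - 1) k + h (2 * m) * Q h hb (2 * m - 3) (k - 1)
          + hb m * Q h hb (2 * m - 4) (k - 1)
          + h (2 * m - 2) * hb m * Q h hb (2 * m - 6) (k - 2)
          + h (2 * m - 5) * hb m * Q h hb (2 * m - 8) (k - 2) :=
  charge_recursion_even_general M h hb b bb hyp hzero

end FFD
end

section
/- For every m with 1 < m ≤ ⌊M/2⌋, the element μ := h_{2m−3} h_{2m} h_{2m−2} ħ_{2m+1} is central among the generators: μ commutes with h_l for every 1 ≤ l ≤ M and with ħ_{2l+1} for every 0 ≤ l ≤ ⌊M/2⌋; moreover μ² = b_{2m−3}² b_{2m}² b_{2m−2}² b̄_{2m+1}² · 1. -/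
namespace FFD

variable {A : Type*} [Ring A] [Algebra ℂ A]

/-!
Each generator commutes or anticommutes with each of the four factors of
`μ = h_{2m-3} h_{2m} h_{2m-2} ħ_{2m+1}`, and around an even hole the number of anticommuting
factors is always even, so the signs cancel and `μ` commutes with the generator. Likewise,
reordering `μ μ` into the product of the four squares passes exactly four anticommuting pairs.
-/

def SignCommute {A : Type*} [Ring A] (s : ℤ) (x y : A) : Prop := x * y = s • (y * x)

namespace SignCommute

variable {A : Type*} [Ring A] {s t : ℤ} {x y z : A}

theorem of_eq (h : x * y = y * x) : SignCommute 1 x y := by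
  rw [SignCommute, one_zsmul, h]

theorem of_eq_neg (h : x * y = -(y * x)) : SignCommute (-1) x y := by
  rw [SignCommute, neg_one_zsmul, h]

theorem commute (h : SignCommute 1 x y) : Commute x y := by
  rw [SignCommute, one_zsmul] at h
  exact h

theorem mul_right (hy : SignCommute s x y) (hz : SignCommute t x z) :
    SignCommute (s * t) x (y * z) := by
  unfold SignCommute at *
  rw [← mul_assoc, hy, smul_mul_assoc, mul_assoc, hz, mul_smul_comm, smul_smul, mul_assoc]

theorem mul_mul_self (h : SignCommute s y x) : x * y * (x * y) = s • (x * x * (y * y)) := by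
  calc x * y * (x * y) = x * (y * x) * y := by simp only [mul_assoc]
    _ = s • (x * x * (y * y)) := by rw [h, mul_smul_comm, smul_mul_assoc]; simp only [mul_assoc]

theorem mul_mul_self_eq_smul_one {R : Type*} [CommRing R] [Algebra R A] {c d : R}
    (h : SignCommute s y x) (hx : x * x = c • 1) (hy : y * y = d • 1) :
    x * y * (x * y) = ((s : R) * c * d) • 1 := by
  rw [h.mul_mul_self, hx, hy, smul_mul_smul_comm, one_mul, ← Int.cast_smul_eq_zsmul R, smul_smul,
    mul_assoc]

end SignCommute

instance (m l : ℤ) : Decidable (MixedRel m l) := by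
  unfold MixedRel
  infer_instance

/-- The paper's `μ_{2m-1}`, the product of the generators around the even hole at `2m`. -/
def holeProd {A : Type*} [Ring A] (h hb : ℤ → A) (m : ℤ) : A :=
  h (2 * m - 3) * h (2 * m) * h (2 * m - 2) * hb m

/- The sign with which `h l` (resp. `ħ_{2l+1}`, the `B` in the names) commutes past `h a`
(resp. `ħ_{2a+1}`), read off from the relations of `FFDHyp`. -/
def signHH (l a : ℤ) : ℤ := if 1 ≤ |l - a| ∧ |l - a| ≤ 2 then -1 else 1

def signBH (l a : ℤ) : ℤ := if MixedRel l a then -1 else 1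

def signBB (l m : ℤ) : ℤ := if |l - m| = 1 then -1 else 1

theorem hole_sign_h_eq_one (m l : ℤ) :
    signHH l (2 * m - 3) * signHH l (2 * m) * signHH l (2 * m - 2) * signBH m l = 1 := by
  unfold signHH signBH
  split_ifs <;> simp only [MixedRel, Int.abs_eq_natAbs] at * <;> omega

theorem hole_sign_hb_eq_one (m l : ℤ) :
    signBH l (2 * m - 3) * signBH l (2 * m) * signBH l (2 * m - 2) * signBB l m = 1 := by
  unfold signBH signBB
  split_ifs <;> simp only [MixedRel, Int.abs_eq_natAbs] at * <;> omega

theorem hole_sign_mul_self_eq_one (m : ℤ) :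
    signHH (2 * m) (2 * m - 3) * (signHH (2 * m - 2) (2 * m - 3) * signHH (2 * m - 2) (2 * m))
      * (signBH m (2 * m - 3) * signBH m (2 * m) * signBH m (2 * m - 2)) = 1 := by
  unfold signHH signBH
  split_ifs <;>
    simp only [MixedRel, Int.abs_eq_natAbs, true_or, or_true, not_true_eq_false] at * <;> omega

namespace FFDHyp

variable {A : Type*} [Ring A] [Algebra ℂ A] {M : ℤ} {h hb : ℤ → A} {b bb : ℤ → ℂ}

theorem signCommute_h_h (hyp : FFDHyp M h hb b bb) {l a : ℤ} (hl1 : 1 ≤ l) (hlM : l ≤ M)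
    (ha1 : 1 ≤ a) (haM : a ≤ M) : SignCommute (signHH l a) (h l) (h a) := by
  unfold signHH
  split_ifs with hd
  · exact .of_eq_neg (hyp.hanti l a hl1 hlM ha1 haM hd.1 hd.2)
  · rcases eq_or_ne l a with rfl | hne
    · exact .of_eq rfl
    · exact .of_eq (hyp.hcomm l a hl1 hlM ha1 haM
        (not_le.mp (not_and.mp hd (Int.one_le_abs (sub_ne_zero.mpr hne)))))

theorem signCommute_hb_h (hyp : FFDHyp M h hb b bb) {l a : ℤ} (hl0 : 0 ≤ l) (hlM : l ≤ M / 2)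
    (ha1 : 1 ≤ a) (haM : a ≤ M) : SignCommute (signBH l a) (hb l) (h a) := by
  unfold signBH
  split_ifs with hr
  · exact .of_eq_neg (hyp.hbanti l a hl0 hlM ha1 haM hr)
  · exact .of_eq (hyp.hbcomm l a hl0 hlM ha1 haM hr)

theorem signCommute_h_hb (hyp : FFDHyp M h hb b bb) {l a : ℤ} (hl0 : 0 ≤ l) (hlM : l ≤ M / 2)
    (ha1 : 1 ≤ a) (haM : a ≤ M) : SignCommute (signBH l a) (h a) (hb l) := by
  unfold signBH
  split_ifs with hr
  · exact .of_eq_neg (neg_eq_iff_eq_neg.mp (hyp.hbanti l a hl0 hlM ha1 haM hr).symm)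
  · exact .of_eq (hyp.hbcomm l a hl0 hlM ha1 haM hr).symm

theorem signCommute_hb_hb (hyp : FFDHyp M h hb b bb) {l m : ℤ} (hl0 : 0 ≤ l) (hlM : l ≤ M / 2)
    (hm0 : 0 ≤ m) (hmM : m ≤ M / 2) : SignCommute (signBB l m) (hb l) (hb m) := by
  unfold signBB
  split_ifs with hd
  · exact .of_eq_neg (hyp.hbbanti l m hl0 hlM hm0 hmM hd)
  · rcases eq_or_ne l m with rfl | hne
    · exact .of_eq rfl
    · exact .of_eq (hyp.hbbcomm l m hl0 hlM hm0 hmM hne hd)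

variable (hyp : FFDHyp M h hb b bb) {m : ℤ} (hm1 : 1 < m) (hmM : m ≤ M / 2)
include hyp hm1 hmM

theorem holeProd_mul_h {l : ℤ} (hl1 : 1 ≤ l) (hlM : l ≤ M) :
    holeProd h hb m * h l = h l * holeProd h hb m := by
  have hs := (((hyp.signCommute_h_h hl1 hlM (a := 2 * m - 3) (by omega) (by omega)).mul_right
    (hyp.signCommute_h_h hl1 hlM (a := 2 * m) (by omega) (by omega))).mul_right
    (hyp.signCommute_h_h hl1 hlM (a := 2 * m - 2) (by omega) (by omega))).mul_right
    (hyp.signCommute_h_hb (l := m) (by omega) hmM hl1 hlM)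
  rw [hole_sign_h_eq_one] at hs
  exact hs.commute.eq.symm

theorem holeProd_mul_hb {l : ℤ} (hl0 : 0 ≤ l) (hlM : l ≤ M / 2) :
    holeProd h hb m * hb l = hb l * holeProd h hb m := by
  have hs := (((hyp.signCommute_hb_h hl0 hlM (a := 2 * m - 3) (by omega) (by omega)).mul_right
    (hyp.signCommute_hb_h hl0 hlM (a := 2 * m) (by omega) (by omega))).mul_right
    (hyp.signCommute_hb_h hl0 hlM (a := 2 * m - 2) (by omega) (by omega))).mul_right
    (hyp.signCommute_hb_hb (m := m) hl0 hlM (by omega) hmM)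
  rw [hole_sign_hb_eq_one] at hs
  exact hs.commute.eq.symm

theorem holeProd_mul_self :
    holeProd h hb m * holeProd h hb m =
      ((b (2 * m - 3)) ^ 2 * (b (2 * m)) ^ 2 * (b (2 * m - 2)) ^ 2 * (bb m) ^ 2) • (1 : A) := by
  have s2 := hyp.signCommute_h_h (l := 2 * m) (a := 2 * m - 3) (by omega) (by omega)
    (by omega) (by omega)
  have s3 := (hyp.signCommute_h_h (l := 2 * m - 2) (a := 2 * m - 3) (by omega) (by omega)
    (by omega) (by omega)).mul_right
    (hyp.signCommute_h_h (l := 2 * m - 2) (a := 2 * m) (by omega) (by omega) (by omega) (by omega))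
  have s4 := ((hyp.signCommute_hb_h (l := m) (a := 2 * m - 3) (by omega) hmM (by omega)
    (by omega)).mul_right
    (hyp.signCommute_hb_h (l := m) (a := 2 * m) (by omega) hmM (by omega) (by omega))).mul_right
    (hyp.signCommute_hb_h (l := m) (a := 2 * m - 2) (by omega) hmM (by omega) (by omega))
  have hsign := congrArg (Int.cast (R := ℂ)) (hole_sign_mul_self_eq_one m)
  rw [holeProd, s4.mul_mul_self_eq_smul_one
    (s3.mul_mul_self_eq_smul_one
      (s2.mul_mul_self_eq_smul_one (hyp.hsq _ (by omega) (by omega))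
        (hyp.hsq _ (by omega) (by omega)))
      (hyp.hsq _ (by omega) (by omega)))
    (hyp.hbsq m (by omega) hmM)]
  congr 1
  push_cast at hsign ⊢
  linear_combination (b (2 * m - 3) ^ 2 * b (2 * m) ^ 2 * b (2 * m - 2) ^ 2 * bb m ^ 2) * hsign

end FFDHyp

theorem even_hole_product_is_central_general
    {A : Type*} [Ring A] [Algebra ℂ A]
    (M : ℤ) (h hb : ℤ → A) (b bb : ℤ → ℂ)
    (hyp : FFDHyp M h hb b bb) :
    ∀ m : ℤ, 1 < m → m ≤ M / 2 →
      (∀ l : ℤ, 1 ≤ l → l ≤ M →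
        (h (2 * m - 3) * h (2 * m) * h (2 * m - 2) * hb m) * h l
          = h l * (h (2 * m - 3) * h (2 * m) * h (2 * m - 2) * hb m)) ∧
      (∀ l : ℤ, 0 ≤ l → l ≤ M / 2 →
        (h (2 * m - 3) * h (2 * m) * h (2 * m - 2) * hb m) * hb l
          = hb l * (h (2 * m - 3) * h (2 * m) * h (2 * m - 2) * hb m)) ∧
      (h (2 * m - 3) * h (2 * m) * h (2 * m - 2) * hb m)
          * (h (2 * m - 3) * h (2 * m) * h (2 * m - 2) * hb m)
        = ((b (2 * m - 3)) ^ 2 * (b (2 * m)) ^ 2 * (b (2 * m - 2)) ^ 2 * (bb m) ^ 2)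
            • (1 : A) := by
  intro m hm1 hmM
  exact ⟨fun l hl1 hlM => hyp.holeProd_mul_h hm1 hmM hl1 hlM,
    fun l hl0 hlM => hyp.holeProd_mul_hb hm1 hmM hl0 hlM, hyp.holeProd_mul_self hm1 hmM⟩

/-- For `1 < m ≤ ⌊M/2⌋`, the element
`μ = h_{2m-3} h_{2m} h_{2m-2} ħ_{2m+1}` commutes with every generator, and
`μ² = b_{2m-3}² b_{2m}² b_{2m-2}² b̄_{2m+1}² · 1`. -/
theorem even_hole_product_is_central
    {A : Type*} [Ring A] [Algebra ℂ A]
    (M : ℤ) (hM : 4 ≤ M) (h hb : ℤ → A) (b bb : ℤ → ℂ)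
    (hyp : FFDHyp M h hb b bb) :
    ∀ m : ℤ, 1 < m → m ≤ M / 2 →
      (∀ l : ℤ, 1 ≤ l → l ≤ M →
        (h (2 * m - 3) * h (2 * m) * h (2 * m - 2) * hb m) * h l
          = h l * (h (2 * m - 3) * h (2 * m) * h (2 * m - 2) * hb m)) ∧
      (∀ l : ℤ, 0 ≤ l → l ≤ M / 2 →
        (h (2 * m - 3) * h (2 * m) * h (2 * m - 2) * hb m) * hb l
          = hb l * (h (2 * m - 3) * h (2 * m) * h (2 * m - 2) * hb m)) ∧
      (h (2 * m - 3) * h (2 * m) * h (2 * m - 2) * hb m)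
          * (h (2 * m - 3) * h (2 * m) * h (2 * m - 2) * hb m)
        = ((b (2 * m - 3)) ^ 2 * (b (2 * m)) ^ 2 * (b (2 * m - 2)) ^ 2 * (bb m) ^ 2)
            • (1 : A) :=
  even_hole_product_is_central_general M h hb b bb hyp

end FFD
end

section
/- The independence number of the graph G (the maximal cardinality of a set of pairwise non-adjacent vertices) equals ⌊(M+2)/3⌋. -/
namespace FFDGraph

/-- Index pattern for the adjacency of the barred vertex `2m+1` with the plain vertex `l`. -/
def MixedRel (m l : ℤ) : Prop :=
  l = 2 * m - 5 ∨ l = 2 * m - 3 ∨ l = 2 * m - 1 ∨ l = 2 * m + 1 ∨ l = 2 * m ∨ l = 2 * m + 2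

/-- Vertices: `Sum.inl i` is the plain vertex `i`, `Sum.inr m` is the barred vertex
`v̄_{2m+1}`.  Adjacency: plain vertices `i ≠ j` are adjacent iff `1 ≤ |i - j| ≤ 2`;
the barred vertex `v̄_{2m+1}` is adjacent to exactly the plain vertices
`l ∈ {2m-5, 2m-3, 2m-1, 2m+1, 2m, 2m+2}`; two barred vertices `v̄_{2m+1}`, `v̄_{2m'+1}`
are adjacent iff `|m - m'| = 1`. -/
def Adj : ℕ ⊕ ℕ → ℕ ⊕ ℕ → Prop
  | .inl i, .inl j => 1 ≤ |(i : ℤ) - (j : ℤ)| ∧ |(i : ℤ) - (j : ℤ)| ≤ 2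
  | .inl l, .inr m => MixedRel (m : ℤ) (l : ℤ)
  | .inr m, .inl l => MixedRel (m : ℤ) (l : ℤ)
  | .inr m, .inr m' => |(m : ℤ) - (m' : ℤ)| = 1

/-- The vertex set of the frustration graph: plain vertices `1, …, M` and barred vertices
`v̄_{2m+1}` for `2 ≤ m ≤ ⌊M/2⌋`. -/
def memV (M : ℕ) : ℕ ⊕ ℕ → Prop
  | .inl i => 1 ≤ i ∧ i ≤ M
  | .inr m => 2 ≤ m ∧ m ≤ M / 2

/-! The set `{1, 4, 7, …}` of plain vertices attains the bound. Conversely, cut the plain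
vertices into the blocks `{3k+1, 3k+2, 3k+3}`, `k < ⌊(M+2)/3⌋`, and send every vertex of an
independent set `S` to a block: a plain vertex to its own block, and `v̄_{2m+1}` to a block
lying inside its neighbourhood, or containing, besides neighbours, only one plain vertex
that `S` cannot contain. This map is injective on `S`. -/

open Finset

theorem adj_inl_inl_iff {i j : ℕ} :
    Adj (.inl i) (.inl j) ↔ i ≠ j ∧ i ≤ j + 2 ∧ j ≤ i + 2 := by
  change 1 ≤ |(i : ℤ) - j| ∧ |(i : ℤ) - j| ≤ 2 ↔ _
  rw [le_abs, abs_le]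
  omega

theorem adj_inr_inr_iff {m m' : ℕ} : Adj (.inr m) (.inr m') ↔ m = m' + 1 ∨ m' = m + 1 := by
  change |(m : ℤ) - m'| = 1 ↔ _
  rw [abs_eq zero_le_one]
  omega

theorem adj_inr_inl_iff {m l : ℕ} : Adj (.inr m) (.inl l) ↔ MixedRel m l := Iff.rfl

def IsIndep (S : Finset (ℕ ⊕ ℕ)) : Prop :=
  ∀ v ∈ S, ∀ w ∈ S, v ≠ w → ¬Adj v w

theorem IsIndep.eq_of_adj {S : Finset (ℕ ⊕ ℕ)} (hS : IsIndep S) {v w : ℕ ⊕ ℕ}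
    (hv : v ∈ S) (hw : w ∈ S) (h : Adj v w) : v = w :=
  by_contra fun hne ↦ hS v hv w hw hne h

def everyThird (n : ℕ) : Finset (ℕ ⊕ ℕ) :=
  (range n).image fun k ↦ .inl (3 * k + 1)

theorem card_everyThird (n : ℕ) : (everyThird n).card = n := by
  rw [everyThird, card_image_of_injective _ fun a b h ↦ by
    simp only [Sum.inl.injEq] at h; omega, card_range]

theorem isIndep_everyThird (n : ℕ) : IsIndep (everyThird n) := by
  simp only [IsIndep, everyThird, mem_image, mem_range]
  rintro _ ⟨k, -, rfl⟩ _ ⟨k', -, rfl⟩ -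
  rw [adj_inl_inl_iff]
  omega

theorem memV_of_mem_everyThird {M : ℕ} {v : ℕ ⊕ ℕ} (hv : v ∈ everyThird ((M + 2) / 3)) :
    memV M v := by
  simp only [everyThird, mem_image, mem_range] at hv
  obtain ⟨k, hk, rfl⟩ := hv
  exact ⟨by omega, by omega⟩

def plainBlock (i : ℕ) : ℕ := (i - 1) / 3

/-- For `m ≢ 0 (mod 3)` the chosen block is `{2m-1, 2m, 2m+1}` or `{2m, 2m+1, 2m+2}`, all
neighbours of `v̄_{2m+1}`. For `m ≡ 0` it is `{2m-2, 2m-1, 2m}`, unless `2m-2 ∈ S`, in which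
case it is `{2m-5, 2m-4, 2m-3}`, whose non-neighbour `2m-4` is adjacent to `2m-2`. -/
def barredBlock (S : Finset (ℕ ⊕ ℕ)) (m : ℕ) : ℕ :=
  if m % 3 = 1 then (2 * m - 2) / 3
  else if m % 3 = 2 then (2 * m - 1) / 3
  else if .inl (2 * m - 2) ∈ S then (2 * m - 6) / 3
  else (2 * m - 3) / 3

def block (S : Finset (ℕ ⊕ ℕ)) : ℕ ⊕ ℕ → ℕ :=
  Sum.elim plainBlock (barredBlock S)

theorem block_lt {M : ℕ} (S : Finset (ℕ ⊕ ℕ)) {v : ℕ ⊕ ℕ} (hv : memV M v) :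
    block S v < (M + 2) / 3 := by
  rcases v with i | m
  · obtain ⟨hi, hiM⟩ : 1 ≤ i ∧ i ≤ M := hv
    simp only [block, Sum.elim_inl, plainBlock]
    omega
  · obtain ⟨hm, hmM⟩ : 2 ≤ m ∧ m ≤ M / 2 := hv
    simp only [block, Sum.elim_inr, barredBlock]
    split_ifs <;> omega

section IsIndep

variable {S : Finset (ℕ ⊕ ℕ)} (hS : IsIndep S)
include hS

theorem IsIndep.eq_of_plainBlock_eq {i j : ℕ} (hi : .inl i ∈ S) (hj : .inl j ∈ S)
    (hi1 : 1 ≤ i) (hj1 : 1 ≤ j) (h : plainBlock i = plainBlock j) : i = j := by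
  by_contra hne
  unfold plainBlock at h
  exact hne (Sum.inl_injective (hS.eq_of_adj hi hj (adj_inl_inl_iff.2 (by omega))))

theorem IsIndep.plainBlock_ne_barredBlock {i m : ℕ} (hi : .inl i ∈ S) (hm : .inr m ∈ S)
    (hi1 : 1 ≤ i) (hm2 : 2 ≤ m) : plainBlock i ≠ barredBlock S m := by
  intro h
  have not_mixed : ¬MixedRel m i := fun hmix ↦
    Sum.inr_ne_inl (hS.eq_of_adj hm hi (adj_inr_inl_iff.2 hmix))
  unfold plainBlock barredBlock at h
  split_ifs at h with h1 h2 hmem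
  · exact not_mixed (by unfold MixedRel; omega)
  · exact not_mixed (by unfold MixedRel; omega)
  · have hi4 : i = 2 * m - 4 := by by_contra; exact not_mixed (by unfold MixedRel; omega)
    have := Sum.inl_injective (hS.eq_of_adj hi hmem (adj_inl_inl_iff.2 (by omega)))
    omega
  · have hi2 : i = 2 * m - 2 := by by_contra; exact not_mixed (by unfold MixedRel; omega)
    exact hmem (hi2 ▸ hi)

theorem IsIndep.eq_of_barredBlock_eq {m m' : ℕ} (hm : .inr m ∈ S) (hm' : .inr m' ∈ S)
    (h2 : 2 ≤ m) (h2' : 2 ≤ m') (h : barredBlock S m = barredBlock S m') : m = m' := by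
  by_contra hne
  have not_adj : ¬(m = m' + 1 ∨ m' = m + 1) := fun hadj ↦
    hne (Sum.inr_injective (hS.eq_of_adj hm hm' (adj_inr_inr_iff.2 hadj)))
  have not_mixed {a b : ℕ} (ha : .inr a ∈ S) (hb : .inl (2 * b - 2) ∈ S)
      (hmix : MixedRel a (2 * b - 2 : ℕ)) : False :=
    Sum.inr_ne_inl (hS.eq_of_adj ha hb (adj_inr_inl_iff.2 hmix))
  unfold barredBlock at h
  split_ifs at h <;> first
    | omega
    | exact not_mixed hm (by assumption) (by unfold MixedRel; omega)
    | exact not_mixed hm' (by assumption) (by unfold MixedRel; omega)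

theorem IsIndep.injOn_block {M : ℕ} (hV : ∀ v ∈ S, memV M v) : Set.InjOn (block S) S := by
  intro v hv w hw h
  rcases v with i | m <;> rcases w with j | m'
  · exact congrArg _ (hS.eq_of_plainBlock_eq hv hw (hV _ hv).1 (hV _ hw).1 h)
  · exact (hS.plainBlock_ne_barredBlock hv hw (hV _ hv).1 (hV _ hw).1 h).elim
  · exact (hS.plainBlock_ne_barredBlock hw hv (hV _ hw).1 (hV _ hv).1 h.symm).elim
  · exact congrArg _ (hS.eq_of_barredBlock_eq hv hw (hV _ hv).1 (hV _ hw).1 h)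

theorem IsIndep.card_le {M : ℕ} (hV : ∀ v ∈ S, memV M v) : S.card ≤ (M + 2) / 3 := by
  simpa using card_le_card_of_injOn (block S) (fun v hv ↦ mem_range.2 (block_lt S (hV v hv)))
    (hS.injOn_block hV)

end IsIndep

theorem independence_number_general (M : ℕ) :
    IsGreatest {n : ℕ | ∃ S : Finset (ℕ ⊕ ℕ),
        (∀ v ∈ S, memV M v) ∧
        (∀ v ∈ S, ∀ w ∈ S, v ≠ w → ¬Adj v w) ∧
        S.card = n}
      ((M + 2) / 3) := by
  refine ⟨⟨everyThird ((M + 2) / 3), fun _ ↦ memV_of_mem_everyThird,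
    isIndep_everyThird _, card_everyThird _⟩, ?_⟩
  rintro _ ⟨S, hV, hS, rfl⟩
  exact IsIndep.card_le hS hV

/-- The independence number of the frustration graph of the FFD model
with claws equals `⌊(M + 2)/3⌋`: this value is attained by an independent set, and every
independent set has at most this cardinality. -/
theorem independence_number (M : ℕ) (hM : 5 ≤ M) :
    IsGreatest {n : ℕ | ∃ S : Finset (ℕ ⊕ ℕ),
        (∀ v ∈ S, memV M v) ∧
        (∀ v ∈ S, ∀ w ∈ S, v ≠ w → ¬Adj v w) ∧
        S.card = n}
      ((M + 2) / 3) :=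
  independence_number_general M

end FFDGraph
end

section
/- The operators h_1,…,h_{N−2} satisfy the FFD algebra relations: h_m · h_m = b_m² · I; h_m · h_l = − h_l · h_m whenever 1 ≤ |m−l| ≤ 2 (both indices in {1,…,N−2}); and h_m · h_l = h_l · h_m whenever |m−l| > 2. -/
/-!
Write `h_m = b_m P_m` with the Pauli string `P_m = σ_m^z σ_{m+1}^z σ_{m+2}^x`. Single-site
operators on different sites commute, because Kronecker products multiply slot by slot; on a
common site `σ^x` and `σ^z` anticommute. Each `P_m` is a product of three commuting involutions,
so `P_m² = 1`. For `l = m + 1` or `l = m + 2` the strings overlap so that exactly one site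
carries the `σ^x` of `P_m` against a `σ^z` of `P_l`, while all other pairs of factors commute,
so `P_m` and `P_l` anticommute; for `|m - l| > 2` their supports are disjoint.
-/

namespace FFDRep

/-- The iterated Kronecker product of a list of `2 × 2` complex matrices, as a
`2^L.length × 2^L.length` matrix. -/
noncomputable def tensorPow :
    (L : List (Matrix (Fin 2) (Fin 2) ℂ)) →
      Matrix (Fin (2 ^ L.length)) (Fin (2 ^ L.length)) ℂ
  | [] => 1
  | a :: l =>
      Matrix.reindex (finProdFinEquiv.trans (finCongr (by simp [pow_succ]; ring)))
        (finProdFinEquiv.trans (finCongr (by simp [pow_succ]; ring)))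
        (Matrix.kroneckerMap (· * ·) a (tensorPow l))

/-- The Pauli matrix `σ^x`. -/
def sigmaX : Matrix (Fin 2) (Fin 2) ℂ := !![0, 1; 1, 0]

/-- The Pauli matrix `σ^z`. -/
def sigmaZ : Matrix (Fin 2) (Fin 2) ℂ := !![1, 0; 0, -1]

/-- `σ_m^α = I₂^{⊗(m-1)} ⊗ σ^α ⊗ I₂^{⊗(N-m)}`, the matrix with the single-site operator
`σ` placed in slot `m` of an `N`-fold Kronecker product of `2 × 2` identity matrices
(and junk value `0` if `m ∉ {1, …, N}`). -/
noncomputable def pauliAt (N m : ℕ) (σ : Matrix (Fin 2) (Fin 2) ℂ) :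
    Matrix (Fin (2 ^ N)) (Fin (2 ^ N)) ℂ :=
  if hm : 1 ≤ m ∧ m ≤ N then
    Matrix.reindex
      (finCongr (by
        obtain ⟨h1, h2⟩ := hm
        have hlen : (List.replicate (m - 1) (1 : Matrix (Fin 2) (Fin 2) ℂ)
            ++ σ :: List.replicate (N - m) 1).length = N := by
          simp
          omega
        rw [hlen]))
      (finCongr (by
        obtain ⟨h1, h2⟩ := hm
        have hlen : (List.replicate (m - 1) (1 : Matrix (Fin 2) (Fin 2) ℂ)
            ++ σ :: List.replicate (N - m) 1).length = N := by
          simp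
          omega
        rw [hlen]))
      (tensorPow (List.replicate (m - 1) 1 ++ σ :: List.replicate (N - m) 1))
  else 0

/-- The generators `h_m = b_m σ_m^z σ_{m+1}^z σ_{m+2}^x` of Fendley's
free-fermions-in-disguise model in its standard spin-chain representation. -/
noncomputable def hGen (N : ℕ) (b : ℕ → ℂ) (m : ℕ) :
    Matrix (Fin (2 ^ N)) (Fin (2 ^ N)) ℂ :=
  b m • (pauliAt N m sigmaZ * pauliAt N (m + 1) sigmaZ * pauliAt N (m + 2) sigmaX)

open scoped Kronecker

section KroneckerTuple

variable {R : Type*} [CommSemiring R] {d : ℕ}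

noncomputable def kroneckerTuple :
    (n : ℕ) → (Fin n → Matrix (Fin d) (Fin d) R) → Matrix (Fin (d ^ n)) (Fin (d ^ n)) R
  | 0, _ => 1
  | n + 1, f =>
      Matrix.reindex (finProdFinEquiv.trans (finCongr (pow_succ' d n).symm))
        (finProdFinEquiv.trans (finCongr (pow_succ' d n).symm))
        (f 0 ⊗ₖ kroneckerTuple n (Fin.tail f))

theorem kroneckerTuple_mul : ∀ (n : ℕ) (f g : Fin n → Matrix (Fin d) (Fin d) R),
    kroneckerTuple n f * kroneckerTuple n g = kroneckerTuple n (f * g)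
  | 0, _, _ => mul_one 1
  | n + 1, f, g => by
    simp only [kroneckerTuple, Matrix.reindex_apply, Matrix.submatrix_mul_equiv,
      ← Matrix.mul_kronecker_mul, kroneckerTuple_mul n]
    rfl

theorem kroneckerTuple_one : ∀ n : ℕ, kroneckerTuple n (1 : Fin n → Matrix (Fin d) (Fin d) R) = 1
  | 0 => rfl
  | n + 1 => by
    have h : Fin.tail (1 : Fin (n + 1) → Matrix (Fin d) (Fin d) R) = 1 := rfl
    rw [kroneckerTuple, Pi.one_apply, h, kroneckerTuple_one n, Matrix.one_kronecker_one,
      Matrix.reindex_apply, Matrix.submatrix_one_equiv]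

theorem kroneckerTuple_commute {n : ℕ} {f g : Fin n → Matrix (Fin d) (Fin d) R}
    (h : Commute f g) : Commute (kroneckerTuple n f) (kroneckerTuple n g) := by
  rw [commute_iff_eq, kroneckerTuple_mul, kroneckerTuple_mul, h.eq]

theorem kroneckerTuple_update_smul : ∀ (n : ℕ) (f : Fin n → Matrix (Fin d) (Fin d) R)
    (i : Fin n) (c : R) (A : Matrix (Fin d) (Fin d) R),
    kroneckerTuple n (Function.update f i (c • A)) = c • kroneckerTuple n (Function.update f i A)
  | 0, _, i, _, _ => i.elim0
  | n + 1, f, i, c, A => by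
    induction i using Fin.cases with
    | zero =>
      simp only [kroneckerTuple, Function.update_self, Matrix.smul_kronecker, Fin.tail_update_zero,
        Matrix.reindex_apply, Matrix.submatrix_smul]
      rfl
    | succ k =>
      simp only [kroneckerTuple, Fin.tail_update_succ, kroneckerTuple_update_smul n,
        Function.update_of_ne (Fin.succ_ne_zero k).symm, Matrix.kronecker_smul,
        Matrix.reindex_apply, Matrix.submatrix_smul]
      rfl

theorem kroneckerTuple_reindex_finCongr {n n' : ℕ} (h : n = n') (h' : d ^ n = d ^ n')
    (f : Fin n → Matrix (Fin d) (Fin d) R) :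
    Matrix.reindex (finCongr h') (finCongr h') (kroneckerTuple n f)
      = kroneckerTuple n' (f ∘ Fin.cast h.symm) := by
  subst h
  rfl

end KroneckerTuple

theorem tensorPow_eq_kroneckerTuple :
    ∀ L : List (Matrix (Fin 2) (Fin 2) ℂ), tensorPow L = kroneckerTuple L.length L.get
  | [] => rfl
  | a :: l => by
    rw [tensorPow, tensorPow_eq_kroneckerTuple l]
    rfl

theorem pauliAt_eq_kroneckerTuple {N m : ℕ} (hm : 1 ≤ m ∧ m ≤ N)
    (σ : Matrix (Fin 2) (Fin 2) ℂ) :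
    pauliAt N m σ = kroneckerTuple N (Pi.mulSingle ⟨m - 1, by omega⟩ σ) := by
  have hlen : (List.replicate (m - 1) (1 : Matrix (Fin 2) (Fin 2) ℂ)
      ++ σ :: List.replicate (N - m) 1).length = N := by
    simp only [List.length_append, List.length_replicate, List.length_cons]
    omega
  rw [pauliAt, dif_pos hm, tensorPow_eq_kroneckerTuple, kroneckerTuple_reindex_finCongr hlen]
  congr 1
  funext i
  simp only [Function.comp_apply, List.get_eq_getElem, Fin.val_cast, List.getElem_append,
    List.length_replicate, List.getElem_replicate, List.getElem_cons, Pi.mulSingle_apply,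
    Fin.ext_iff]
  split_ifs <;> first | rfl | omega

theorem pauliAt_mul_pauliAt (N m : ℕ) (σ τ : Matrix (Fin 2) (Fin 2) ℂ) :
    pauliAt N m σ * pauliAt N m τ = pauliAt N m (σ * τ) := by
  by_cases hm : 1 ≤ m ∧ m ≤ N
  · simp only [pauliAt_eq_kroneckerTuple hm, kroneckerTuple_mul, Pi.mulSingle_mul]
  · simp only [pauliAt, dif_neg hm, mul_zero]

theorem pauliAt_smul (N m : ℕ) (c : ℂ) (σ : Matrix (Fin 2) (Fin 2) ℂ) :
    pauliAt N m (c • σ) = c • pauliAt N m σ := by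
  by_cases hm : 1 ≤ m ∧ m ≤ N
  · simp only [pauliAt_eq_kroneckerTuple hm, Pi.mulSingle, kroneckerTuple_update_smul]
  · simp only [pauliAt, dif_neg hm, smul_zero]

theorem pauliAt_neg (N m : ℕ) (σ : Matrix (Fin 2) (Fin 2) ℂ) :
    pauliAt N m (-σ) = -pauliAt N m σ := by
  rw [← neg_one_smul ℂ σ, pauliAt_smul, neg_one_smul]

theorem pauliAt_one {N m : ℕ} (hm : 1 ≤ m ∧ m ≤ N) : pauliAt N m 1 = 1 := by
  rw [pauliAt_eq_kroneckerTuple hm, Pi.mulSingle_one, kroneckerTuple_one]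

theorem pauliAt_commute {N m l : ℕ} (hml : m ≠ l) (σ τ : Matrix (Fin 2) (Fin 2) ℂ) :
    Commute (pauliAt N m σ) (pauliAt N l τ) := by
  by_cases hm : 1 ≤ m ∧ m ≤ N
  · by_cases hl : 1 ≤ l ∧ l ≤ N
    · rw [pauliAt_eq_kroneckerTuple hm, pauliAt_eq_kroneckerTuple hl]
      have hne : (⟨m - 1, by omega⟩ : Fin N) ≠ ⟨l - 1, by omega⟩ := by
        simp only [ne_eq, Fin.mk.injEq]
        omega
      exact kroneckerTuple_commute
        (Pi.mulSingle_commute (f := fun _ => Matrix (Fin 2) (Fin 2) ℂ) hne σ τ)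
    · simp only [pauliAt, dif_neg hl, Commute.zero_right]
  · simp only [pauliAt, dif_neg hm, Commute.zero_left]

theorem pauliAt_commute_of_commute {σ τ : Matrix (Fin 2) (Fin 2) ℂ} (h : Commute σ τ)
    (N m l : ℕ) : Commute (pauliAt N m σ) (pauliAt N l τ) := by
  obtain rfl | hml := eq_or_ne m l
  · rw [commute_iff_eq, pauliAt_mul_pauliAt, pauliAt_mul_pauliAt, h.eq]
  · exact pauliAt_commute hml σ τ

theorem pauliAt_sq {N m : ℕ} (hm : 1 ≤ m ∧ m ≤ N) {σ : Matrix (Fin 2) (Fin 2) ℂ}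
    (hσ : σ * σ = 1) : pauliAt N m σ ^ 2 = 1 := by
  rw [sq, pauliAt_mul_pauliAt, hσ, pauliAt_one hm]

section Anticommute

variable {A : Type*}

def Anticommute [Mul A] [Neg A] (a b : A) : Prop := a * b = -(b * a)

variable [Semigroup A] [HasDistribNeg A] {a b c : A}

theorem Anticommute.symm (h : Anticommute a b) : Anticommute b a := by
  rw [Anticommute, h, neg_neg]

theorem Anticommute.mul_right (hab : Anticommute a b) (hac : Commute a c) :
    Anticommute a (b * c) := by
  rw [Anticommute, ← mul_assoc, hab, neg_mul, mul_assoc, hac.eq, mul_assoc]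

theorem _root_.Commute.anticommute_mul_right (hab : Commute a b) (hac : Anticommute a c) :
    Anticommute a (b * c) := by
  rw [Anticommute, ← mul_assoc, hab.eq, mul_assoc, hac, mul_neg, mul_assoc]

theorem _root_.Commute.anticommute_mul_left (hac : Commute a c) (hbc : Anticommute b c) :
    Anticommute (a * b) c :=
  (hac.symm.anticommute_mul_right hbc.symm).symm

end Anticommute

theorem Anticommute.smul_smul {S A : Type*} [CommSemiring S] [Ring A] [Algebra S A] {a b : A}
    (h : Anticommute a b) (r s : S) : Anticommute (r • a) (s • b) := by
  rw [Anticommute, smul_mul_smul_comm, smul_mul_smul_comm, h, mul_comm r, smul_neg]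

theorem pauliAt_anticommute {σ τ : Matrix (Fin 2) (Fin 2) ℂ} (h : Anticommute σ τ)
    (N m : ℕ) : Anticommute (pauliAt N m σ) (pauliAt N m τ) := by
  rw [Anticommute, pauliAt_mul_pauliAt, h, pauliAt_neg, pauliAt_mul_pauliAt]

theorem sigmaX_mul_sigmaX : sigmaX * sigmaX = 1 := by
  simp [sigmaX, Matrix.one_fin_two]

theorem sigmaZ_mul_sigmaZ : sigmaZ * sigmaZ = 1 := by
  simp [sigmaZ, Matrix.one_fin_two]

theorem sigmaX_anticommute_sigmaZ : Anticommute sigmaX sigmaZ := by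
  simp [Anticommute, sigmaX, sigmaZ, Matrix.neg_of]

noncomputable def pauliString (N m : ℕ) : Matrix (Fin (2 ^ N)) (Fin (2 ^ N)) ℂ :=
  pauliAt N m sigmaZ * pauliAt N (m + 1) sigmaZ * pauliAt N (m + 2) sigmaX

theorem hGen_eq_smul_pauliString (N : ℕ) (b : ℕ → ℂ) (m : ℕ) :
    hGen N b m = b m • pauliString N m :=
  rfl

theorem pauliString_sq {N m : ℕ} (h1 : 1 ≤ m) (h2 : m + 2 ≤ N) : pauliString N m ^ 2 = 1 := by
  have hZZ : Commute (pauliAt N m sigmaZ) (pauliAt N (m + 1) sigmaZ) :=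
    pauliAt_commute_of_commute (Commute.refl _) _ _ _
  have hZZX : Commute (pauliAt N m sigmaZ * pauliAt N (m + 1) sigmaZ) (pauliAt N (m + 2) sigmaX) :=
    (pauliAt_commute (by omega) _ _).mul_left (pauliAt_commute (by omega) _ _)
  rw [pauliString, hZZX.mul_pow, hZZ.mul_pow, pauliAt_sq (by omega) sigmaZ_mul_sigmaZ,
    pauliAt_sq (by omega) sigmaZ_mul_sigmaZ, pauliAt_sq (by omega) sigmaX_mul_sigmaX, one_mul,
    one_mul]

theorem pauliString_anticommute_succ (N m : ℕ) :
    Anticommute (pauliString N m) (pauliString N (m + 1)) := by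
  refine Commute.anticommute_mul_left ?_ ?_
  · refine .mul_left ?_ ?_ <;> refine .mul_right (.mul_right ?_ ?_) ?_ <;>
      first
      | exact pauliAt_commute (by omega) _ _
      | exact pauliAt_commute_of_commute (Commute.refl _) _ _ _
  · exact (Commute.anticommute_mul_right (pauliAt_commute (by omega) _ _)
      (pauliAt_anticommute sigmaX_anticommute_sigmaZ _ _)).mul_right
      (pauliAt_commute_of_commute (Commute.refl _) _ _ _)

theorem pauliString_anticommute_add_two (N m : ℕ) :
    Anticommute (pauliString N m) (pauliString N (m + 2)) := by
  refine Commute.anticommute_mul_left ?_ ?_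
  · refine .mul_left ?_ ?_ <;> refine .mul_right (.mul_right ?_ ?_) ?_ <;>
      exact pauliAt_commute (by omega) _ _
  · exact ((pauliAt_anticommute sigmaX_anticommute_sigmaZ _ _).mul_right
      (pauliAt_commute (by omega) _ _)).mul_right
      (pauliAt_commute_of_commute (Commute.refl _) _ _ _)

theorem pauliString_commute {N m l : ℕ} (h : m + 3 ≤ l) :
    Commute (pauliString N m) (pauliString N l) := by
  refine .mul_left (.mul_left ?_ ?_) ?_ <;> refine .mul_right (.mul_right ?_ ?_) ?_ <;>
    exact pauliAt_commute (by omega) _ _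

theorem pauli_representation_satisfies_FFD_algebra_general
    (N : ℕ) (b : ℕ → ℂ) :
    (∀ m : ℕ, 1 ≤ m → m ≤ N - 2 →
      hGen N b m * hGen N b m
        = (b m) ^ 2 • (1 : Matrix (Fin (2 ^ N)) (Fin (2 ^ N)) ℂ)) ∧
    (∀ m l : ℕ, 1 ≤ m → m ≤ N - 2 → 1 ≤ l → l ≤ N - 2 →
      1 ≤ |(m : ℤ) - (l : ℤ)| → |(m : ℤ) - (l : ℤ)| ≤ 2 →
      hGen N b m * hGen N b l = -(hGen N b l * hGen N b m)) ∧
    (∀ m l : ℕ, 1 ≤ m → m ≤ N - 2 → 1 ≤ l → l ≤ N - 2 →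
      2 < |(m : ℤ) - (l : ℤ)| →
      hGen N b m * hGen N b l = hGen N b l * hGen N b m) := by
  simp only [hGen_eq_smul_pauliString]
  refine ⟨fun m hm1 hm2 => ?_, fun m l _ _ _ _ hd1 hd2 => ?_, fun m l _ _ _ _ hd => ?_⟩
  · rw [smul_mul_smul, ← sq, ← sq, pauliString_sq hm1 (by omega)]
  · have hml : l = m + 1 ∨ l = m + 2 ∨ m = l + 1 ∨ m = l + 2 := by
      rcases abs_cases ((m : ℤ) - l) with ⟨h, _⟩ | ⟨h, _⟩ <;> omega
    rcases hml with rfl | rfl | rfl | rfl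
    · exact (pauliString_anticommute_succ N m).smul_smul _ _
    · exact (pauliString_anticommute_add_two N m).smul_smul _ _
    · exact (pauliString_anticommute_succ N l).symm.smul_smul _ _
    · exact (pauliString_anticommute_add_two N l).symm.smul_smul _ _
  · have hml : m + 3 ≤ l ∨ l + 3 ≤ m := by
      rcases abs_cases ((m : ℤ) - l) with ⟨h, _⟩ | ⟨h, _⟩ <;> omega
    rcases hml with h | h
    · exact ((pauliString_commute h).smul_left _).smul_right _
    · exact (((pauliString_commute h).smul_left _).smul_right _).symm

/-- The operators `h_1, …, h_{N-2}` satisfy the FFD algebra relations: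
`h_m² = b_m² I`, `h_m h_l = -h_l h_m` for `1 ≤ |m - l| ≤ 2` and
`h_m h_l = h_l h_m` for `|m - l| > 2`. -/
theorem pauli_representation_satisfies_FFD_algebra
    (N : ℕ) (hN : 3 ≤ N) (b : ℕ → ℂ) :
    (∀ m : ℕ, 1 ≤ m → m ≤ N - 2 →
      hGen N b m * hGen N b m
        = (b m) ^ 2 • (1 : Matrix (Fin (2 ^ N)) (Fin (2 ^ N)) ℂ)) ∧
    (∀ m l : ℕ, 1 ≤ m → m ≤ N - 2 → 1 ≤ l → l ≤ N - 2 →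
      1 ≤ |(m : ℤ) - (l : ℤ)| → |(m : ℤ) - (l : ℤ)| ≤ 2 →
      hGen N b m * hGen N b l = -(hGen N b l * hGen N b m)) ∧
    (∀ m l : ℕ, 1 ≤ m → m ≤ N - 2 → 1 ≤ l → l ≤ N - 2 →
      2 < |(m : ℤ) - (l : ℤ)| →
      hGen N b m * hGen N b l = hGen N b l * hGen N b m) :=
  pauli_representation_satisfies_FFD_algebra_general N b

end FFDRep
end
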